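/- arXiv:math/0503514 — 5 statements merged into one kernel-verified Lean document; each statement's English description precedes it below -/
import Mathlib

section
/- Let G be a group and L a subgroup of infinite index, and let X = L t_1 ∪ ... ∪ L t_s be a finite union of right cosets of L. Then there exists g ∈ G with Xg ∩ X = ∅. -/
open scoped Pointwise
/-- If `L` has infinite index in `G` and `X = L t₁ ∪ ... ∪ L tₛ` is a finite union of
right cosets of `L`, then there exists `g ∈ G` with `Xg ∩ X = ∅`. -/
theorem exists_translate_disjoint {G : Type*} [Group G] (L : Subgroup G)
    (hL : L.index = 0) {s : ℕ} (t : Fin s → G) :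
    ∃ g : G,
      ((⋃ i, (L : Set G) * {t i}) * {g}) ∩ (⋃ i, (L : Set G) * {t i}) = ∅ := by
  by_contra hcon
  push_neg at hcon
  -- conjugate subgroups
  set H : Fin s × Fin s → Subgroup G := fun p => L.comap (MulAut.conj (t p.2)).toMonoidHom
  set g : Fin s × Fin s → G := fun p => (t p.1)⁻¹ * t p.2
  have hcovers : ⋃ p ∈ (Finset.univ : Finset (Fin s × Fin s)), (g p) • (H p : Set G)
      = Set.univ := by
    apply Set.eq_univ_of_forall
    intro x
    obtain ⟨a, ha1, ha2⟩ := hcon x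
    rw [Set.mem_mul] at ha1
    obtain ⟨b, hb, y, hy, hby⟩ := ha1
    rw [Set.mem_singleton_iff] at hy
    subst hy
    rw [Set.mem_iUnion] at hb ha2
    obtain ⟨i, hb⟩ := hb
    obtain ⟨j, ha2⟩ := ha2
    rw [Set.mem_mul] at hb ha2
    obtain ⟨l, hl, u, hu, hlu⟩ := hb
    obtain ⟨l', hl', v, hv, hl'v⟩ := ha2
    rw [Set.mem_singleton_iff] at hu hv
    subst hu; subst hv
    simp only [Set.mem_iUnion, Finset.mem_univ, Set.iUnion_true]
    refine ⟨(i, j), ?_⟩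
    rw [Set.mem_smul_set_iff_inv_smul_mem]
    simp only [H, g, Subgroup.mem_comap, MulEquiv.coe_toMonoidHom, MulAut.conj_apply,
      smul_eq_mul]
    have hy : y = (l * t i)⁻¹ * (l' * t j) := by
      rw [hlu, hl'v]; exact eq_inv_mul_iff_mul_eq.mpr hby
    subst hy
    have : t j * (((t i)⁻¹ * t j)⁻¹ * ((l * t i)⁻¹ * (l' * t j))) * (t j)⁻¹ = l⁻¹ * l' := by
      group
    rw [SetLike.mem_coe, Subgroup.mem_comap]
    simp only [MulEquiv.coe_toMonoidHom, MulAut.conj_apply]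
    rw [this]
    exact L.mul_mem (L.inv_mem hl) hl'
  obtain ⟨k, _, hk⟩ := Subgroup.exists_finiteIndex_of_leftCoset_cover hcovers
  have : (H k).index = 0 := by
    have := Subgroup.index_comap_of_surjective L (f := (MulAut.conj (t k.2)).toMonoidHom) (MulAut.conj (t k.2)).surjective
    rw [this, hL]
  exact hk.index_ne_zero this
end

section
/- Let G be a group, L a subgroup of infinite index, M a module over L, and consider the induced G-module M ⊗_{ZL} ZG. Then the set of G-fixed points of M ⊗_{ZL} ZG is zero. -/
open scoped TensorProduct

noncomputable section

variable {G : Type*} [Group G] (L : Subgroup G)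
variable (M : Type*) [AddCommGroup M] [Module (MonoidAlgebra ℤ L) M]

/-- The relations `(a · l) ⊗ m - a ⊗ (l · m)` defining the induced module
`M ⊗_{ℤL} ℤG` (written here with left modules, as `ℤG ⊗_{ℤL} M`). -/
def inducedRelations : Submodule ℤ (MonoidAlgebra ℤ G ⊗[ℤ] M) :=
  Submodule.span ℤ
    { x | ∃ (a : MonoidAlgebra ℤ G) (l : L) (m : M),
        x = (a * MonoidAlgebra.single (l : G) (1 : ℤ)) ⊗ₜ[ℤ] m
            - a ⊗ₜ[ℤ] ((MonoidAlgebra.single l (1 : ℤ)) • m) }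

/-- The induced module `ℤG ⊗_{ℤL} M`. -/
def Induced := (MonoidAlgebra ℤ G ⊗[ℤ] M) ⧸ inducedRelations L M

instance : AddCommGroup (Induced L M) := by unfold Induced; infer_instance
instance : Module ℤ (Induced L M) := by unfold Induced; infer_instance

/-- Left multiplication by `g` on the first tensor factor. -/
def actAux (g : G) :
    (MonoidAlgebra ℤ G ⊗[ℤ] M) →ₗ[ℤ] (MonoidAlgebra ℤ G ⊗[ℤ] M) :=
  TensorProduct.map (LinearMap.mulLeft ℤ (MonoidAlgebra.single g (1 : ℤ))) LinearMap.id

/-- The action of `g ∈ G` on the induced module. -/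
def inducedAct (g : G) : Induced L M →ₗ[ℤ] Induced L M :=
  Submodule.mapQ (inducedRelations L M) (inducedRelations L M) (actAux (G := G) M g)
    (by
      rw [← Submodule.map_le_iff_le_comap, inducedRelations, Submodule.map_span]
      apply Submodule.span_le.2
      rintro y ⟨x, ⟨a, l, m, rfl⟩, rfl⟩
      apply Submodule.subset_span
      refine ⟨MonoidAlgebra.single g (1 : ℤ) * a, l, m, ?_⟩
      simp [actAux, TensorProduct.map_tmul, mul_assoc]
      erw [map_sub, TensorProduct.map_tmul, TensorProduct.map_tmul]
      rfl)

/-! ### Auxiliary constructions -/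

/-- Scalar multiplication by a fixed element of `ℤL`, as a `ℤ`-linear map. -/
def smL (r : MonoidAlgebra ℤ L) : M →ₗ[ℤ] M :=
  AddMonoidHom.toIntLinearMap (DistribSMul.toAddMonoidHom M r)

@[simp] lemma smL_apply (r : MonoidAlgebra ℤ L) (m : M) : smL L M r m = r • m := rfl

lemma smul_int_smul (r : MonoidAlgebra ℤ L) (z : ℤ) (m : M) :
    r • (z • m) = z • (r • m) :=
  (smL L M r).map_smul z m

/-- For `g : G`, the element of `L` relating `g` to the chosen coset representative. -/
def lpart (g : G) : L :=
  ⟨(QuotientGroup.mk g : G ⧸ L).out⁻¹ * g,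
    QuotientGroup.eq.mp (QuotientGroup.out_eq' (QuotientGroup.mk g : G ⧸ L))⟩

lemma out_mul_lpart (g : G) : (QuotientGroup.mk g : G ⧸ L).out * (lpart L g : G) = g := by
  simp [lpart]

/-- The components map `ℤG ⊗ M → ⊕_{G/L} M` before passing to the quotient. -/
def phiAux : MonoidAlgebra ℤ G ⊗[ℤ] M →ₗ[ℤ] (G ⧸ L →₀ M) :=
  TensorProduct.lift
    (((Finsupp.lift (M →ₗ[ℤ] (G ⧸ L →₀ M)) ℤ G)
      fun g => (Finsupp.lsingle (QuotientGroup.mk g) : M →ₗ[ℤ] (G ⧸ L →₀ M)) ∘ₗ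
        smL L M (MonoidAlgebra.single (lpart L g) 1)) ∘ₗ
        (MonoidAlgebra.coeffLinearEquiv ℤ).toLinearMap)

lemma phiAux_single_tmul (g : G) (z : ℤ) (m : M) :
    phiAux L M (MonoidAlgebra.single g z ⊗ₜ[ℤ] m)
      = Finsupp.single (QuotientGroup.mk g)
          (z • (MonoidAlgebra.single (lpart L g) (1 : ℤ) • m)) := by
  unfold phiAux
  erw [TensorProduct.lift.tmul, LinearMap.comp_apply]
  erw [Finsupp.lift_apply, Finsupp.sum_single_index (by simp)]
  simp [smL, Finsupp.smul_single]

lemma inducedRelations_le_ker : inducedRelations L M ≤ LinearMap.ker (phiAux L M) := by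
  rw [inducedRelations, Submodule.span_le]
  rintro y ⟨a, l, m, rfl⟩
  simp only [SetLike.mem_coe, LinearMap.mem_ker, map_sub, sub_eq_zero]
  induction a using MonoidAlgebra.induction_linear with
  | zero => simp [TensorProduct.zero_tmul]
  | add f g hf hg =>
      rw [add_mul, TensorProduct.add_tmul, TensorProduct.add_tmul, map_add, map_add, hf, hg]
  | single g z =>
      rw [MonoidAlgebra.single_mul_single, mul_one, phiAux_single_tmul, phiAux_single_tmul]
      have hq : (QuotientGroup.mk (g * (l : G)) : G ⧸ L) = QuotientGroup.mk g := by
        rw [QuotientGroup.eq]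
        simpa [mul_inv_rev, mul_assoc] using (inv_mem l.2 : (l : G)⁻¹ ∈ L)
      rw [hq]
      congr 1
      have hl : lpart L (g * (l : G)) = lpart L g * l := by
        ext
        simp [lpart, hq, mul_assoc]
      rw [hl, ← mul_smul, MonoidAlgebra.single_mul_single, one_mul]

/-- The components map on the induced module. -/
def phi : Induced L M →ₗ[ℤ] (G ⧸ L →₀ M) :=
  Submodule.liftQ (inducedRelations L M) (phiAux L M) (inducedRelations_le_ker L M)

lemma phi_mk (y : MonoidAlgebra ℤ G ⊗[ℤ] M) :
    phi L M (Submodule.Quotient.mk y) = phiAux L M y := rfl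

/-- The inverse map `⊕_{G/L} M → ℤG ⊗_{ℤL} M`. -/
def psiComp (c : G ⧸ L) : M →ₗ[ℤ] Induced L M :=
  ((Submodule.mkQ (inducedRelations L M)) ∘ₗ
      (TensorProduct.mk ℤ (MonoidAlgebra ℤ G) M (MonoidAlgebra.single c.out 1))
    : M →ₗ[ℤ] (MonoidAlgebra ℤ G ⊗[ℤ] M) ⧸ inducedRelations L M)

instance : @SMulCommClass ℤ ℤ (Induced L M) (instModuleIntInduced L M).toSMul
    (instModuleIntInduced L M).toSMul := smulCommClass_self ℤ _

def psi : (G ⧸ L →₀ M) →ₗ[ℤ] Induced L M :=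
  (Finsupp.lsum ℤ) (psiComp L M)

lemma psi_single (c : G ⧸ L) (m : M) :
    psi L M (Finsupp.single c m)
      = Submodule.Quotient.mk (MonoidAlgebra.single c.out (1 : ℤ) ⊗ₜ[ℤ] m) := by
  rw [psi, Finsupp.lsum_single]
  rfl

lemma mk_rel (a : MonoidAlgebra ℤ G) (l : L) (m : M) :
    (Submodule.Quotient.mk ((a * MonoidAlgebra.single (l : G) (1 : ℤ)) ⊗ₜ[ℤ] m)
      : Induced L M)
    = Submodule.Quotient.mk (a ⊗ₜ[ℤ] ((MonoidAlgebra.single l (1 : ℤ)) • m)) := by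
  rw [Submodule.Quotient.eq]
  exact Submodule.subset_span ⟨a, l, m, rfl⟩

lemma psi_phi (x : Induced L M) : psi L M (phi L M x) = x := by
  obtain ⟨y, rfl⟩ := Submodule.Quotient.mk_surjective _ x
  rw [phi_mk]
  induction y using TensorProduct.induction_on with
  | zero => simp; rfl
  | add a b ha hb => rw [map_add, map_add, ha, hb, Submodule.Quotient.mk_add]; rfl
  | tmul a m =>
    induction a using MonoidAlgebra.induction_linear with
    | zero => simp [TensorProduct.zero_tmul]; rfl
    | add f g hf hg =>
        rw [TensorProduct.add_tmul, Submodule.Quotient.mk_add, map_add, map_add, hf, hg]; rfl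
    | single g z =>
        rw [phiAux_single_tmul, psi_single]
        have h2 : (Submodule.Quotient.mk
            (MonoidAlgebra.single (QuotientGroup.mk g : G ⧸ L).out (1 : ℤ)
              ⊗ₜ[ℤ] (MonoidAlgebra.single (lpart L g) (1 : ℤ) • m)) : Induced L M)
            = Submodule.Quotient.mk (MonoidAlgebra.single g (1 : ℤ) ⊗ₜ[ℤ] m) := by
          rw [← mk_rel, MonoidAlgebra.single_mul_single, one_mul, out_mul_lpart]
        rw [← TensorProduct.smul_tmul, MonoidAlgebra.smul_single', mul_one, ← mk_rel,
          MonoidAlgebra.single_mul_single, mul_one, out_mul_lpart]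

lemma phi_act (g₀ : G) (c : G ⧸ L) (x : Induced L M) :
    phi L M (inducedAct L M g₀ x) c
      = MonoidAlgebra.single ((lpart L (g₀⁻¹ * c.out))⁻¹ : L) (1 : ℤ)
          • phi L M x (QuotientGroup.mk (g₀⁻¹ * c.out)) := by
  obtain ⟨y, rfl⟩ := Submodule.Quotient.mk_surjective _ x
  induction y using TensorProduct.induction_on with
  | zero => erw [map_zero]; simp
  | add a b ha hb =>
      rw [Submodule.Quotient.mk_add]; erw [map_add, map_add, map_add]; rw [Finsupp.add_apply,
        Finsupp.add_apply, ha, hb, smul_add]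
  | tmul a m =>
    induction a using MonoidAlgebra.induction_linear with
    | zero => simp [TensorProduct.zero_tmul]; erw [map_zero]; simp
    | add f g hf hg =>
        rw [TensorProduct.add_tmul, Submodule.Quotient.mk_add]; erw [map_add, map_add, map_add]
        rw [Finsupp.add_apply, Finsupp.add_apply, hf, hg, smul_add]
    | single g z =>
        have hact : inducedAct L M g₀
            (Submodule.Quotient.mk (MonoidAlgebra.single g z ⊗ₜ[ℤ] m))
            = Submodule.Quotient.mk (MonoidAlgebra.single (g₀ * g) z ⊗ₜ[ℤ] m) := by
          show Submodule.mapQ _ _ _ _ _ = _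
          rw [Submodule.mapQ_apply, actAux]; erw [TensorProduct.map_tmul]
          rw [LinearMap.mulLeft_apply, LinearMap.id_apply, MonoidAlgebra.single_mul_single,
            one_mul]
        have key : (QuotientGroup.mk (g₀ * g) : G ⧸ L) = c ↔
            (QuotientGroup.mk g : G ⧸ L) = QuotientGroup.mk (g₀⁻¹ * c.out) := by
          constructor <;> intro h
          · have h1 : (QuotientGroup.mk (g₀ * g) : G ⧸ L) = QuotientGroup.mk c.out := by
              rw [QuotientGroup.out_eq']; exact h
            have := QuotientGroup.eq.mp h1
            rw [QuotientGroup.eq]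
            simpa [mul_inv_rev, mul_assoc] using this
          · have := QuotientGroup.eq.mp h
            rw [show c = QuotientGroup.mk c.out from (QuotientGroup.out_eq' c).symm,
              QuotientGroup.eq]
            simpa [mul_inv_rev, mul_assoc] using this
        rw [hact, phi_mk, phi_mk, phiAux_single_tmul, phiAux_single_tmul]
        by_cases hc : (QuotientGroup.mk (g₀ * g) : G ⧸ L) = c
        · have hc' := (key.mp hc).symm
          rw [hc, hc', Finsupp.single_eq_same, Finsupp.single_eq_same, smul_int_smul]
          congr 1
          rw [← mul_smul, MonoidAlgebra.single_mul_single, one_mul]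
          congr 2
          ext
          simp only [lpart, Subgroup.coe_mul, InvMemClass.coe_inv, hc, hc']
          group
        · rw [Finsupp.single_eq_of_ne (Ne.symm hc),
            Finsupp.single_eq_of_ne (fun h => hc (key.mpr h.symm)), smul_zero]

lemma single_smul_ne_zero (l : L) {m : M} (hm : m ≠ 0) :
    MonoidAlgebra.single l (1 : ℤ) • m ≠ 0 := by
  intro h
  apply hm
  have : MonoidAlgebra.single l⁻¹ (1 : ℤ) • (MonoidAlgebra.single l (1 : ℤ) • m) = 0 := by
    rw [h, smul_zero]
  rwa [← mul_smul, MonoidAlgebra.single_mul_single, one_mul, inv_mul_cancel,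
    ← MonoidAlgebra.one_def, one_smul] at this

/-- If `L` has infinite index in `G`, then the `G`-fixed points of the induced module
`M ⊗_{ℤL} ℤG` are zero. -/
theorem fixedPoints_induced_eq_zero (hL : L.index = 0)
    (x : Induced L M) (hx : ∀ g : G, inducedAct L M g x = x) : x = 0 := by
  have hinf : Infinite (G ⧸ L) := by
    rw [Subgroup.index] at hL
    rcases Nat.card_eq_zero.mp hL with h | h
    · exact h.elim ((1 : G) : G ⧸ L)
    · exact h
  have hzero : phi L M x = 0 := by
    by_contra hne
    obtain ⟨c₀, hc₀⟩ : ∃ c₀, phi L M x c₀ ≠ 0 := by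
      by_contra hall
      push_neg at hall
      exact hne (Finsupp.ext hall)
    -- every coset is in the support
    have hall : ∀ c : G ⧸ L, phi L M x c ≠ 0 := by
      intro c
      set g₀ : G := c.out * c₀.out⁻¹ with hg₀
      have h1 : (QuotientGroup.mk (g₀⁻¹ * c.out) : G ⧸ L) = c₀ := by
        rw [hg₀]
        simp only [mul_inv_rev, inv_inv, mul_assoc, inv_mul_cancel_left]
        simp [QuotientGroup.out_eq']
      have h2 := phi_act L M g₀ c x
      rw [hx g₀, h1] at h2
      rw [h2]
      exact single_smul_ne_zero L M _ hc₀
    obtain ⟨c, hc⟩ := Infinite.exists_notMem_finset (phi L M x).support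
    exact hall c (by simpa using (Finsupp.notMem_support_iff.mp hc))
  have := psi_phi L M x
  rw [hzero, map_zero] at this
  exact this.symm

end
end

section
/- Let G be a group and S an admissible family of subgroups. If I is an injective ZG-module, then H^0(S,I) = ⋃_{H∈S} I^H is an injective object in the full subcategory of ZG-modules M satisfying M = ⋃_{H∈S} M^H. -/
universe u

variable {G : Type u} [Group G]

/-- The conjugate subgroup `H^g = g⁻¹ H g`. -/
def conjSub (g : G) (H : Subgroup G) : Subgroup G :=
  H.map (MulAut.conj g⁻¹).toMonoidHom

/-- `H⁰(S,M) = ⋃_{H ∈ S} M^H` for a `ℤG`-module `M`. -/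
def fixedUnion (S : Set (Subgroup G)) (M : Type*) [AddCommGroup M]
    [Module (MonoidAlgebra ℤ G) M] : Set M :=
  {m : M | ∃ H ∈ S, ∀ h ∈ H, (MonoidAlgebra.of ℤ G h) • m = m}

/-- A `ℤG`-module belongs to `Mod-ℤG/S` if every element is fixed by a member of `S`. -/
def InSubcat (S : Set (Subgroup G)) (N : ModuleCat.{u} (MonoidAlgebra ℤ G)) : Prop :=
  ∀ n : N, n ∈ fixedUnion S N

/-- If `S` is an admissible family and `I` is an injective `ℤG`-module, then
`H⁰(S,I) = ⋃_{H∈S} I^H` is injective in the subcategory `Mod-ℤG/S`: any morphism from a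
submodule of an object `N` of the subcategory into `H⁰(S,I)` extends to `N` (with values
still in `H⁰(S,I)`). -/
theorem fixedUnion_injective_in_subcategory (S : Set (Subgroup G))
    (hconj : ∀ H ∈ S, ∀ g : G, conjSub g H ∈ S)
    (hdir : ∀ T : Finset (Subgroup G), ↑T ⊆ S → ∃ K ∈ S, ∀ H ∈ T, K ≤ H)
    (I : Type u) [AddCommGroup I] [Module (MonoidAlgebra ℤ G) I]
    (hI : Module.Injective (MonoidAlgebra ℤ G) I)
    (N : ModuleCat.{u} (MonoidAlgebra ℤ G)) (hN : InSubcat S N)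
    (M : Submodule (MonoidAlgebra ℤ G) N)
    (φ : M →ₗ[MonoidAlgebra ℤ G] I) (hφ : ∀ m : M, φ m ∈ fixedUnion S I) :
    ∃ ψ : N →ₗ[MonoidAlgebra ℤ G] I,
      (∀ n : N, ψ n ∈ fixedUnion S I) ∧ ∀ m : M, ψ m = φ m := by
  obtain ⟨ψ, hψ⟩ := hI.out M.subtype Subtype.val_injective φ
  refine ⟨ψ, fun n => ?_, hψ⟩
  obtain ⟨H, hH, hfix⟩ := hN n
  exact ⟨H, hH, fun h hh => by rw [← map_smul, hfix h hh]⟩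
end

section
/- Let G be a group and S an admissible family of subgroups. Then the category Mod-ZG/S of ZG-modules M with M = ⋃_{H∈S} M^H has enough injectives: every object embeds into an injective object of the subcategory. -/
universe u

variable {G : Type u} [Group G]

open CategoryTheory

section helpers

variable {S : Set (Subgroup G)}
    (hconj : ∀ H ∈ S, ∀ g : G, conjSub g H ∈ S)
    (hdir : ∀ T : Finset (Subgroup G), ↑T ⊆ S → ∃ K ∈ S, ∀ H ∈ T, K ≤ H)
    {M : Type u} [AddCommGroup M] [Module (MonoidAlgebra ℤ G) M]

include hdir in
theorem fixedUnion_zero_mem : (0 : M) ∈ fixedUnion S M := by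
  obtain ⟨K, hK, -⟩ := hdir ∅ (by simp)
  exact ⟨K, hK, fun h _ => smul_zero _⟩

include hdir in
theorem fixedUnion_add_mem {a b : M} (ha : a ∈ fixedUnion S M) (hb : b ∈ fixedUnion S M) :
    a + b ∈ fixedUnion S M := by
  classical
  obtain ⟨H₁, hH₁, ha⟩ := ha
  obtain ⟨H₂, hH₂, hb⟩ := hb
  obtain ⟨K, hK, hKle⟩ := hdir {H₁, H₂} (by
    intro x hx
    simp only [Finset.coe_insert, Finset.coe_singleton, Set.mem_insert_iff,
      Set.mem_singleton_iff] at hx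
    rcases hx with rfl | rfl <;> assumption)
  refine ⟨K, hK, fun h hh => ?_⟩
  rw [smul_add, ha h (hKle H₁ (by simp) hh), hb h (hKle H₂ (by simp) hh)]

include hconj in
theorem fixedUnion_smul_single {m : M} (hm : m ∈ fixedUnion S M) (a : G) (b : ℤ) :
    (MonoidAlgebra.single a b : MonoidAlgebra ℤ G) • m ∈ fixedUnion S M := by
  obtain ⟨H, hH, hm⟩ := hm
  refine ⟨conjSub a⁻¹ H, hconj H hH a⁻¹, fun h hh => ?_⟩
  obtain ⟨k, hk, rfl⟩ := hh
  simp only [MulEquiv.coe_toMonoidHom, MulAut.conj_apply, inv_inv]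
  have : (MonoidAlgebra.of ℤ G (a * k * a⁻¹)) * MonoidAlgebra.single a b
      = MonoidAlgebra.single a b * MonoidAlgebra.of ℤ G k := by
    simp [MonoidAlgebra.of_apply, MonoidAlgebra.single_mul_single, mul_assoc]
  rw [← mul_smul, this, mul_smul, hm k hk]

include hconj hdir in
theorem fixedUnion_smul_mem (r : MonoidAlgebra ℤ G) {m : M} (hm : m ∈ fixedUnion S M) :
    r • m ∈ fixedUnion S M := by
  induction r using MonoidAlgebra.induction with
  | zero => simpa using fixedUnion_zero_mem hdir
  | single_add a b f _ _ ih =>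
      rw [add_smul]
      exact fixedUnion_add_mem hdir (fixedUnion_smul_single hconj hm a b) ih

end helpers

/-- For an admissible family `S`, the category `Mod-ℤG/S` has enough injectives: every
object `M` embeds in an object `I` of the subcategory which is injective in the
subcategory (every morphism into `I` from a submodule of an object of the subcategory
extends to the whole object). -/
theorem subcategory_has_enough_injectives (S : Set (Subgroup G))
    (hconj : ∀ H ∈ S, ∀ g : G, conjSub g H ∈ S)
    (hdir : ∀ T : Finset (Subgroup G), ↑T ⊆ S → ∃ K ∈ S, ∀ H ∈ T, K ≤ H)
    (M : ModuleCat.{u} (MonoidAlgebra ℤ G)) (hM : InSubcat S M) :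
    ∃ (I : ModuleCat.{u} (MonoidAlgebra ℤ G)) (f : M →ₗ[MonoidAlgebra ℤ G] I),
      Function.Injective f ∧ InSubcat S I ∧
      ∀ (N : ModuleCat.{u} (MonoidAlgebra ℤ G)), InSubcat S N →
        ∀ (P : Submodule (MonoidAlgebra ℤ G) N) (φ : P →ₗ[MonoidAlgebra ℤ G] I),
          ∃ ψ : N →ₗ[MonoidAlgebra ℤ G] I, ∀ p : P, ψ p = φ p := by
  classical
  set R := MonoidAlgebra ℤ G
  let J : ModuleCat.{u} R := Injective.under M
  have hJinj : Injective J := inferInstance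
  let ι : M ⟶ J := Injective.ι M
  have hι : Function.Injective ι := by
    rw [← ModuleCat.mono_iff_injective]; infer_instance
  let Isub : Submodule R J :=
    { carrier := fixedUnion S J
      zero_mem' := fixedUnion_zero_mem hdir
      add_mem' := fun ha hb => fixedUnion_add_mem hdir ha hb
      smul_mem' := fun r m hm => fixedUnion_smul_mem hconj hdir r hm }
  -- the image of an element of `fixedUnion` under an equivariant map is in `fixedUnion`
  have key : ∀ (A : ModuleCat.{u} R) (g : A →ₗ[R] J) (a : A),
      a ∈ fixedUnion S A → g a ∈ Isub := by
    rintro A g a ⟨H, hH, ha⟩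
    exact ⟨H, hH, fun h hh => by rw [← map_smul, ha h hh]⟩
  refine ⟨ModuleCat.of R Isub,
    LinearMap.codRestrict Isub ι.hom (fun m => key M ι.hom m (hM m)), ?_, ?_, ?_⟩
  · intro a b hab
    exact hι (congrArg Subtype.val hab)
  · rintro ⟨n, H, hH, hn⟩
    refine ⟨H, hH, fun h hh => Subtype.ext ?_⟩
    simpa using hn h hh
  · intro N hN P φ
    let φ' : ModuleCat.of R P ⟶ J := ModuleCat.ofHom (Isub.subtype ∘ₗ φ)
    let iP : ModuleCat.of R P ⟶ N := ModuleCat.ofHom P.subtype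
    have : Mono iP := (ModuleCat.mono_iff_injective _).mpr Subtype.val_injective
    let ψ' : N ⟶ J := Injective.factorThru φ' iP
    have fact : iP ≫ ψ' = φ' := Injective.comp_factorThru φ' iP
    refine ⟨LinearMap.codRestrict Isub ψ'.hom (fun n => key N ψ'.hom n (hN n)), fun p => ?_⟩
    refine Subtype.ext ?_
    exact congr_arg (fun f => ModuleCat.Hom.hom f p) fact
end

section
/- In Thompson's group F, the subgroup A generated by {x_{2n+1} x_{2n}⁻¹ : n ≥ 0} is abelian. -/
/-- The defining relations of Thompson's group `F`:
`x_i⁻¹ x_j x_i x_{j+1}⁻¹` for `i < j`. -/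
def thompsonRels : Set (FreeGroup ℕ) :=
  { r | ∃ i j : ℕ, i < j ∧
      r = (FreeGroup.of i)⁻¹ * FreeGroup.of j * FreeGroup.of i * (FreeGroup.of (j + 1))⁻¹ }

/-- Thompson's group `F`. -/
abbrev ThompsonF := PresentedGroup thompsonRels

/-- The generator `x_n` of Thompson's group `F`. -/
def X (n : ℕ) : ThompsonF := PresentedGroup.of n

lemma Xrel {i j : ℕ} (h : i < j) : (X i)⁻¹ * X j * X i = X (j + 1) := by
  have hmem : (FreeGroup.of i)⁻¹ * FreeGroup.of j * FreeGroup.of i * (FreeGroup.of (j + 1))⁻¹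
      ∈ Subgroup.normalClosure thompsonRels :=
    Subgroup.subset_normalClosure ⟨i, j, h, rfl⟩
  have h1 : (PresentedGroup.mk thompsonRels)
      ((FreeGroup.of i)⁻¹ * FreeGroup.of j * FreeGroup.of i * (FreeGroup.of (j + 1))⁻¹) = 1 :=
    (QuotientGroup.eq_one_iff _).mpr hmem
  simp only [map_mul, map_inv] at h1
  have : (X i)⁻¹ * X j * X i * (X (j + 1))⁻¹ = 1 := h1
  calc (X i)⁻¹ * X j * X i
      = ((X i)⁻¹ * X j * X i * (X (j + 1))⁻¹) * X (j + 1) := by group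
    _ = X (j + 1) := by rw [this]; group

lemma comm_gen_X {m k : ℕ} (h : 2 * m + 1 < k) :
    Commute (X (2 * m + 1) * (X (2 * m))⁻¹) (X k) := by
  have h0 : 2 * m < k := by omega
  have key : (X (2 * m))⁻¹ * X k * X (2 * m) = (X (2 * m + 1))⁻¹ * X k * X (2 * m + 1) := by
    rw [Xrel h0, Xrel h]
  have h2 : X (2 * m + 1) * ((X (2 * m))⁻¹ * X k * X (2 * m)) * (X (2 * m))⁻¹
      = X (2 * m + 1) * ((X (2 * m + 1))⁻¹ * X k * X (2 * m + 1)) * (X (2 * m))⁻¹ := by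
    rw [key]
  unfold Commute SemiconjBy
  calc X (2 * m + 1) * (X (2 * m))⁻¹ * X k
      = X (2 * m + 1) * ((X (2 * m))⁻¹ * X k * X (2 * m)) * (X (2 * m))⁻¹ := by group
    _ = X (2 * m + 1) * ((X (2 * m + 1))⁻¹ * X k * X (2 * m + 1)) * (X (2 * m))⁻¹ := h2
    _ = X k * (X (2 * m + 1) * (X (2 * m))⁻¹) := by group

lemma comm_gens {m n : ℕ} (h : m < n) :
    Commute (X (2 * m + 1) * (X (2 * m))⁻¹) (X (2 * n + 1) * (X (2 * n))⁻¹) := by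
  exact (comm_gen_X (by omega)).mul_right (comm_gen_X (by omega)).inv_right

lemma comm_gens' (m n : ℕ) :
    Commute (X (2 * m + 1) * (X (2 * m))⁻¹) (X (2 * n + 1) * (X (2 * n))⁻¹) := by
  rcases lt_trichotomy m n with h | rfl | h
  · exact comm_gens h
  · exact Commute.refl _
  · exact (comm_gens h).symm

/-- In Thompson's group `F`, the subgroup `A` generated by
`{x_{2n+1} x_{2n}⁻¹ : n ≥ 0}` is abelian. -/
theorem thompson_A_abelian :
    ∀ a ∈ Subgroup.closure {y : ThompsonF | ∃ n : ℕ, y = X (2 * n + 1) * (X (2 * n))⁻¹},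
    ∀ b ∈ Subgroup.closure {y : ThompsonF | ∃ n : ℕ, y = X (2 * n + 1) * (X (2 * n))⁻¹},
      a * b = b * a := by
  intro a ha b hb
  refine Subgroup.closure_induction₂ (p := fun x y _ _ => x * y = y * x)
    ?_ ?_ ?_ ?_ ?_ ?_ ?_ ha hb
  · rintro x y ⟨m, rfl⟩ ⟨n, rfl⟩
    exact comm_gens' m n
  · intro x _; simp
  · intro x _; simp
  · intro x y z _ _ _ h1 h2
    exact (Commute.mul_left h1 h2 : Commute _ _)
  · intro y z x _ _ _ h1 h2
    exact (Commute.mul_right h1 h2 : Commute _ _)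
  · intro x y _ _ h1
    exact (Commute.inv_left h1 : Commute _ _)
  · intro x y _ _ h1
    exact (Commute.inv_right h1 : Commute _ _)
end
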